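/- arXiv:1803.08081 — 2 statements merged into one kernel-verified Lean document; each statement's English description precedes it below -/
import Mathlib

section
/- Let a be a random variable taking values in the positive integers {1,2,3,…} with E[a] < ∞. Then ∏_{i=1}^∞ ℙ[a ≤ i] ≤ 1 / E[a]. -/
open MeasureTheory Filter
open Finset
open scoped ENNReal

/-!
Write `q i = ℙ[a > i]`, so that `ℙ[a ≤ i] = 1 - q i` and `E[a] = ∑_{i ≥ 0} q i ≤ 1 + ∑_{i ≥ 1} q i`.
An induction on `I` gives `∏_{1 ≤ i ≤ I} (1 - q i) * (1 + ∑_{1 ≤ i ≤ I} q i) ≤ 1`, and the infinite product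
is below every partial product, so its product with `E[a]` is at most `1`.
-/

theorem Finset.prod_mul_one_add_sum_le_one {ι R : Type*} [CommSemiring R] [PartialOrder R]
    [IsOrderedRing R] (s : Finset ι) {x y : ι → R} (hx : ∀ i ∈ s, 0 ≤ x i)
    (hy : ∀ i ∈ s, 0 ≤ y i) (hxy : ∀ i ∈ s, x i + y i ≤ 1) :
    (∏ i ∈ s, x i) * (1 + ∑ i ∈ s, y i) ≤ 1 := by
  classical
  induction s using Finset.induction_on with
  | empty => simp
  | insert j s hj ih =>
    simp only [forall_mem_insert] at hx hy hxy
    rw [prod_insert hj, sum_insert hj]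
    set A := ∏ i ∈ s, x i
    set S := ∑ i ∈ s, y i
    have hA : 0 ≤ A := prod_nonneg hx.2
    have hAS : A * (1 + S) ≤ 1 := ih hx.2 hy.2 hxy.2
    have hxA : x j * A ≤ 1 := by
      have hA1 : A ≤ 1 :=
        (le_mul_of_one_le_right hA (le_add_of_nonneg_right (sum_nonneg hy.2))).trans hAS
      exact mul_le_one₀ ((le_add_of_nonneg_right hy.1).trans hxy.1) hA hA1
    calc x j * A * (1 + (y j + S)) = x j * (A * (1 + S)) + y j * (x j * A) := by ring
      _ ≤ x j * 1 + y j * 1 := by gcongr <;> [exact hx.1; exact hy.1]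
      _ ≤ 1 := by simpa using hxy.1

theorem MeasureTheory.lintegral_natCast_eq_tsum_measure_lt {Ω : Type*} [MeasurableSpace Ω]
    {μ : Measure Ω} {a : Ω → ℕ} (ha : Measurable a) :
    ∫⁻ ω, (a ω : ℝ≥0∞) ∂μ = ∑' n : ℕ, μ {ω | n < a ω} := by
  have hmeas : ∀ n : ℕ, MeasurableSet {ω | n < a ω} := fun n => ha measurableSet_Ioi
  have hcount : ∀ k : ℕ, (k : ℝ≥0∞) = ∑' n : ℕ, if n < k then 1 else 0 := fun k => by
    rw [tsum_eq_sum (s := range k) fun n hn => by simpa using hn]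
    simp [filter_true_of_mem]
  calc ∫⁻ ω, (a ω : ℝ≥0∞) ∂μ = ∫⁻ ω, ∑' n : ℕ, {ω | n < a ω}.indicator 1 ω ∂μ := by
        simp only [Set.indicator_apply, Set.mem_ofPred_eq, Pi.one_apply, ← hcount]
    _ = ∑' n : ℕ, ∫⁻ ω, {ω | n < a ω}.indicator 1 ω ∂μ :=
        lintegral_tsum fun n => (measurable_one.indicator (hmeas n)).aemeasurable
    _ = ∑' n : ℕ, μ {ω | n < a ω} := by simp only [lintegral_indicator_one (hmeas _)]

theorem infinite_product_le_inv_mean_general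
    {Ω : Type*} [MeasurableSpace Ω] (P : Measure Ω) [IsProbabilityMeasure P]
    (a : Ω → ℕ) (hmeas : Measurable a)
    (L : ℝ≥0∞)
    (hL : Tendsto (fun I : ℕ => ∏ i ∈ Finset.Icc 1 I, P {ω | a ω ≤ i}) atTop (nhds L)) :
    L ≤ (∫⁻ ω, (a ω : ℝ≥0∞) ∂P)⁻¹ := by
  have hL_le : ∀ I, L ≤ ∏ i ∈ Icc 1 I, P {ω | a ω ≤ i} :=
    Antitone.le_of_tendsto (fun _ _ hmn => prod_le_prod_of_subset_of_le_one'
      (Icc_subset_Icc_right hmn) fun _ _ _ => prob_le_one) hL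
  have hsplit : ∀ i, P {ω | a ω ≤ i} + P {ω | i < a ω} = 1 := fun i => by
    have hcompl : {ω | i < a ω} = {ω | a ω ≤ i}ᶜ := by ext; simp
    rw [hcompl]
    exact prob_add_prob_compl (hmeas measurableSet_Iic)
  rw [ENNReal.le_inv_iff_mul_le, lintegral_natCast_eq_tsum_measure_lt hmeas,
    ENNReal.tsum_eq_iSup_nat' (tendsto_add_atTop_nat 1), ENNReal.mul_iSup]
  refine iSup_le fun I => ?_
  calc L * ∑ n ∈ range (I + 1), P {ω | n < a ω}
      ≤ (∏ i ∈ Icc 1 I, P {ω | a ω ≤ i}) * (1 + ∑ n ∈ Icc 1 I, P {ω | n < a ω}) := by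
        rw [Nat.range_succ_eq_Icc_zero, ← add_sum_Ioc_eq_sum_Icc I.zero_le,
          ← Icc_add_one_left_eq_Ioc, zero_add]
        gcongr
        exacts [hL_le I, prob_le_one]
    _ ≤ 1 := prod_mul_one_add_sum_le_one _ (fun _ _ => zero_le) (fun _ _ => zero_le)
        fun i _ => (hsplit i).le

/-- Let `a` be a random variable taking values in the positive
integers with `E[a] < ∞`. Then `∏_{i=1}^∞ ℙ[a ≤ i] ≤ 1 / E[a]`, where the infinite
product is the limit of the nonincreasing partial products. -/
theorem infinite_product_le_inv_mean
    {Ω : Type*} [MeasurableSpace Ω] (P : Measure Ω) [IsProbabilityMeasure P]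
    (a : Ω → ℕ) (hmeas : Measurable a) (hpos : ∀ ω, 1 ≤ a ω)
    (hmean : ∫⁻ ω, (a ω : ℝ≥0∞) ∂P < ⊤)
    (L : ℝ≥0∞)
    (hL : Tendsto (fun I : ℕ => ∏ i ∈ Finset.Icc 1 I, P {ω | a ω ≤ i}) atTop (nhds L)) :
    L ≤ (∫⁻ ω, (a ω : ℝ≥0∞) ∂P)⁻¹ :=
  infinite_product_le_inv_mean_general P a hmeas L hL
end

section
/- Assume ℙ[a_0 = 1] ∈ (0,1) and E[a_0] < ∞. Then for every n ≥ 1, E[ d_n(0) | 0 is successful ] > 1 and E[ d_n(0) | 0 is ephemeral ] < 1, where d_n(0) = #{m ∈ ℤ : f^n(m) = 0}. -/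
open MeasureTheory ProbabilityTheory Filter
open scoped ENNReal ProbabilityTheory

/-- The random map `f(n) = n + a_n` generating the family tree `T^f`. -/
def genMap {Ω : Type*} (a : ℤ → Ω → ℕ) (ω : Ω) : ℤ → ℤ :=
  fun n => n + (a n ω : ℤ)

/-- The set of descendants (of all degrees) of `n`: `D(n) = {m : f^j(m) = n, some j ≥ 0}`. -/
def descendants {Ω : Type*} (a : ℤ → Ω → ℕ) (ω : Ω) (n : ℤ) : Set ℤ :=
  {m : ℤ | ∃ j : ℕ, (genMap a ω)^[j] m = n}

/-!
By stationarity `ℙ[fⁿ(m) = 0] = ℙ[fⁿ(0) = -m]`, so `E[dₙ(0)] = ∑ₘ ℙ[fⁿ(m) = 0] = 1`.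
The event `fⁿ(m) = 0` reads only the steps at sites `≥ m`, while "`m` is ephemeral" reads only
those at sites `< m` (orbits are strictly increasing), so the two are independent. If `0` is
ephemeral, so is each of its ancestors; hence
`E[dₙ(0); 0 ephemeral] ≤ ∑ₘ ℙ[fⁿ(m) = 0] ℙ[m ephemeral] = ℙ[0 ephemeral]`.
The inequality is strict because with positive probability `0` is successful yet has an
ephemeral `n`-th ancestor; this is where `ℙ[a₀ = 1] ∈ (0,1)` and `E[a₀] < ∞` enter.
Subtracting from `E[dₙ(0)] = 1` gives the bound on the successful side.
-/

section ComapOn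

variable {ι Ω β : Type*} [MeasurableSpace β] (Y : ι → Ω → β)

abbrev comapOn (t : Set ι) : MeasurableSpace Ω :=
  ⨆ i ∈ t, MeasurableSpace.comap (Y i) inferInstance

lemma comapOn_le [MeasurableSpace Ω] (hY : ∀ i, Measurable (Y i)) (t : Set ι) :
    comapOn Y t ≤ ‹MeasurableSpace Ω› :=
  iSup₂_le fun i _ => (hY i).comap_le

lemma comapOn_mono {t t' : Set ι} (h : t ⊆ t') : comapOn Y t ≤ comapOn Y t' :=
  biSup_mono h

lemma measurableSet_comapOn {t : Set ι} {i : ι} (hi : i ∈ t) {B : Set β}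
    (hB : MeasurableSet B) : MeasurableSet[comapOn Y t] (Y i ⁻¹' B) :=
  le_biSup (fun i => MeasurableSpace.comap (Y i) inferInstance) hi _ ⟨B, hB, rfl⟩

lemma ProbabilityTheory.iIndepFun.measure_inter_eq_mul_of_comapOn [MeasurableSpace Ω]
    {P : Measure Ω} (hY : ∀ i, Measurable (Y i)) (hind : iIndepFun Y P) (t : Set ι)
    {A B : Set Ω} (hA : MeasurableSet[comapOn Y t] A) (hB : MeasurableSet[comapOn Y tᶜ] B) :
    P (A ∩ B) = P A * P B :=
  (Indep_iff _ _ _).1 (indep_iSup_of_disjoint (fun i => (hY i).comap_le) hind.iIndep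
    disjoint_compl_right) A B hA hB

end ComapOn

lemma ProbabilityTheory.iIndepFun.measure_iInter_preimage_pos {ι Ω β : Type*} [Countable ι]
    [MeasurableSpace Ω] [MeasurableSpace β] {P : Measure Ω} [IsProbabilityMeasure P]
    {Y : ι → Ω → β} (hY : ∀ i, Measurable (Y i)) (hind : iIndepFun Y P) {B : ι → Set β}
    (hB : ∀ i, MeasurableSet (B i)) (hpos : ∀ i, 0 < P (Y i ⁻¹' B i))
    (hsum : ∑' i, P (Y i ⁻¹' (B i)ᶜ) ≠ ∞) : 0 < P (⋂ i, Y i ⁻¹' B i) := by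
  -- Away from a finite set `J` the union bound already leaves positive mass.
  obtain ⟨J, hJ⟩ : ∃ J : Finset ι, ∑' i : {i // i ∉ J}, P (Y i ⁻¹' (B i)ᶜ) < 1 :=
    ((ENNReal.tendsto_tsum_compl_atTop_zero hsum).eventually_lt_const zero_lt_one).exists
  have hsplit : ⋂ i, Y i ⁻¹' B i =
      (⋂ i ∈ J, Y i ⁻¹' B i) ∩ ⋂ i : {i // i ∉ J}, Y i ⁻¹' B i := by
    ext ω
    simp only [Set.mem_iInter, Set.mem_inter_iff, Subtype.forall]
    exact ⟨fun h => ⟨fun i _ => h i, fun i _ => h i⟩,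
      fun ⟨h₁, h₂⟩ i => by by_cases hi : i ∈ J; exacts [h₁ i hi, h₂ i hi]⟩
  have hhead : 0 < P (⋂ i ∈ J, Y i ⁻¹' B i) := by
    rw [hind.meas_biInter fun i _ => ⟨B i, hB i, rfl⟩]
    exact CanonicallyOrderedAdd.prod_pos.2 fun i _ => hpos i
  have htail : 0 < P (⋂ i : {i // i ∉ J}, Y i ⁻¹' B i) := by
    have hcompl : P (⋂ i : {i // i ∉ J}, Y i ⁻¹' B i)ᶜ < 1 := by
      rw [Set.compl_iInter]
      exact (measure_iUnion_le _).trans_lt hJ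
    refine pos_iff_ne_zero.2 fun h0 => hcompl.ne ?_
    have := prob_compl_eq_one_sub (μ := P) (.iInter fun i : {i // i ∉ J} => hY i (hB i))
    rwa [h0, tsub_zero] at this
  rw [hsplit, hind.measure_inter_eq_mul_of_comapOn Y hY J
    (A := ⋂ i ∈ J, Y i ⁻¹' B i) (B := ⋂ i : {i // i ∉ J}, Y i ⁻¹' B i)
    (Finset.measurableSet_biInter J fun i hi => measurableSet_comapOn Y hi (hB i))
    (.iInter fun i => measurableSet_comapOn Y i.2 (hB i))]
  exact ENNReal.mul_pos hhead.ne' htail.ne'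

lemma tsum_measure_lt_eq_lintegral {Ω : Type*} [MeasurableSpace Ω] (μ : Measure Ω)
    {Z : Ω → ℕ} (hZ : Measurable Z) : ∑' i : ℕ, μ {ω | i < Z ω} = ∫⁻ ω, (Z ω : ℝ≥0∞) ∂μ := by
  have hset : ∀ i : ℕ, MeasurableSet {ω | i < Z ω} := fun i => hZ .of_discrete
  calc ∑' i : ℕ, μ {ω | i < Z ω}
      = ∑' i : ℕ, ∫⁻ ω, {ω | i < Z ω}.indicator 1 ω ∂μ := by
        simp only [lintegral_indicator_one (hset _)]
    _ = ∫⁻ ω, ∑' i : ℕ, {ω | i < Z ω}.indicator 1 ω ∂μ :=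
        (lintegral_tsum fun i => (measurable_one.indicator (hset i)).aemeasurable).symm
    _ = ∫⁻ ω, (Z ω : ℝ≥0∞) ∂μ := by
        refine lintegral_congr fun ω => ?_
        rw [tsum_eq_sum (s := Finset.range (Z ω)) fun i hi => by simpa using hi,
          Finset.sum_congr rfl (g := fun _ => 1) fun i hi => by simp [Finset.mem_range.1 hi]]
        simp

lemma exists_two_le_measure_preimage_pos {Ω : Type*} [MeasurableSpace Ω] {μ : Measure Ω}
    [IsProbabilityMeasure μ] {X : Ω → ℕ} (hX : Measurable X) (hpos : ∀ ω, 1 ≤ X ω)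
    (h1 : μ {ω | X ω = 1} < 1) : ∃ k, 2 ≤ k ∧ 0 < μ (X ⁻¹' {k}) := by
  by_contra! h
  have hnull : μ {ω | X ω = 1}ᶜ = 0 := by
    refine measure_mono_null (fun ω hω => ?_) (measure_iUnion_null fun k =>
      le_zero_iff.1 (h (k + 2) (by omega)))
    simp only [Set.mem_compl_iff, Set.mem_ofPred_eq] at hω
    have := hpos ω
    exact Set.mem_iUnion.2 ⟨X ω - 2, by simp only [Set.mem_preimage, Set.mem_singleton_iff]; omega⟩
  exact h1.ne ((prob_compl_eq_zero_iff (hX .of_discrete : MeasurableSet (X ⁻¹' {1}))).1 hnull)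

lemma tsum_measure_add_le_tsum {ι Ω : Type*} [MeasurableSpace Ω] (μ : Measure Ω)
    {A B : ι → Set Ω} {F : Set Ω} (i₀ : ι) (hAB : ∀ i, A i ⊆ B i) (hF : F ⊆ B i₀)
    (hdisj : Disjoint (A i₀) F) (hFm : MeasurableSet F) :
    ∑' i, μ (A i) + μ F ≤ ∑' i, μ (B i) := by
  classical
  rw [← tsum_ite_eq i₀ fun _ => μ F, ← ENNReal.tsum_add]
  refine ENNReal.tsum_le_tsum fun i => ?_
  split_ifs with h
  · subst h
    rw [← measure_union hdisj hFm]
    exact measure_mono (Set.union_subset (hAB _) hF)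
  · rw [add_zero]
    exact measure_mono (hAB i)

lemma lintegral_tsum_ite_eq {ι Ω : Type*} [Countable ι] [MeasurableSpace Ω] (μ : Measure Ω)
    {p : ι → Ω → Prop} [∀ i ω, Decidable (p i ω)] (hp : ∀ i, MeasurableSet {ω | p i ω}) :
    ∫⁻ ω, ∑' i, (if p i ω then (1 : ℝ≥0∞) else 0) ∂μ = ∑' i, μ {ω | p i ω} := by
  rw [lintegral_tsum fun i =>
    (Measurable.ite (hp i) measurable_const measurable_const).aemeasurable]
  refine tsum_congr fun i => ?_
  rw [← lintegral_indicator_one (hp i)]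
  simp only [Set.indicator_apply, Set.mem_ofPred_eq, Pi.one_apply]

lemma one_lt_lintegral_cond_compl_and_lintegral_cond_lt_one {Ω : Type*} [MeasurableSpace Ω]
    {μ : Measure Ω} [IsProbabilityMeasure μ] {g : Ω → ℝ≥0∞} {T : Set Ω} (hT : MeasurableSet T)
    (hg : ∫⁻ ω, g ω ∂μ = 1) (hlt : ∫⁻ ω in T, g ω ∂μ < μ T) :
    1 < ∫⁻ ω, g ω ∂μ[|Tᶜ] ∧ ∫⁻ ω, g ω ∂μ[|T] < 1 := by
  have hTc : μ Tᶜ < ∫⁻ ω in Tᶜ, g ω ∂μ := by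
    by_contra! h
    have := ENNReal.add_lt_add_of_lt_of_le (h.trans_lt (measure_lt_top μ _)).ne hlt h
    rw [lintegral_add_compl g hT, hg, measure_add_measure_compl hT, measure_univ] at this
    exact this.false
  have hTc0 : μ Tᶜ ≠ 0 := fun h0 => by
    rw [setLIntegral_measure_zero _ _ h0] at hTc
    exact ENNReal.not_lt_zero hTc
  have hT0 : μ T ≠ 0 := (pos_of_gt hlt).ne'
  constructor
  · rw [ProbabilityTheory.cond, lintegral_smul_measure,
      ← ENNReal.inv_mul_cancel hTc0 (measure_ne_top μ _)]
    exact ENNReal.mul_lt_mul_right (ENNReal.inv_ne_zero.2 (measure_ne_top μ _))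
      (ENNReal.inv_ne_top.2 hTc0) hTc
  · rw [ProbabilityTheory.cond, lintegral_smul_measure,
      ← ENNReal.inv_mul_cancel hT0 (measure_ne_top μ _)]
    exact ENNReal.mul_lt_mul_right (ENNReal.inv_ne_zero.2 (measure_ne_top μ _))
      (ENNReal.inv_ne_top.2 hT0) hlt

namespace GenMap

section Orbit

variable {Ω : Type*} (a : ℤ → Ω → ℕ) (ω : Ω)

lemma le_iterate (x : ℤ) (j : ℕ) : x ≤ (genMap a ω)^[j] x := by
  induction j generalizing x with
  | zero => rfl
  | succ j ih => exact le_trans (by simp [genMap]) (ih (genMap a ω x))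

lemma strictMono_iterate (hpos : ∀ s, 1 ≤ a s ω) (x : ℤ) :
    StrictMono fun j => (genMap a ω)^[j] x := by
  refine strictMono_nat_of_lt_succ fun j => ?_
  rw [Function.iterate_succ_apply']
  have := hpos ((genMap a ω)^[j] x)
  simp only [genMap]
  omega

lemma descendants_subset_Iic (m : ℤ) : descendants a ω m ⊆ Set.Iic m := by
  rintro d ⟨j, hj⟩
  exact hj ▸ le_iterate a ω d j

lemma finite_descendants_iff_bddBelow (m : ℤ) :
    (descendants a ω m).Finite ↔ BddBelow (descendants a ω m) :=
  ⟨Set.Finite.bddBelow, fun h => h.finite_of_bddAbove ⟨m, descendants_subset_Iic a ω m⟩⟩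

lemma descendants_subset_of_iterate_eq {m m' : ℤ} {j : ℕ} (h : (genMap a ω)^[j] m = m') :
    descendants a ω m ⊆ descendants a ω m' := by
  rintro d ⟨i, hi⟩
  exact ⟨j + i, by rw [Function.iterate_add_apply, hi, h]⟩

lemma iterate_add (m p : ℤ) (j : ℕ) :
    (genMap a ω)^[j] (p + m) = (genMap (fun s => a (s + m)) ω)^[j] p + m := by
  have hconj : Function.Semiconj (· + m) (genMap (fun s => a (s + m)) ω) (genMap a ω) :=
    fun q => by simp only [genMap]; ring
  exact (hconj.iterate_right j p).symm

lemma descendants_shift (m : ℤ) :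
    descendants (fun s => a (s + m)) ω 0 = (· + m) ⁻¹' descendants a ω m := by
  ext p
  simp only [descendants, Set.mem_ofPred_eq, Set.mem_preimage, iterate_add]
  exact exists_congr fun j => by omega

lemma iterate_neg_eq_zero_of_ones {n : ℕ} (hone : ∀ s : ℤ, -(n : ℤ) ≤ s → s < 0 → a s ω = 1)
    {j : ℕ} (hj : j ≤ n) : (genMap a ω)^[j] (-j) = 0 := by
  induction j with
  | zero => rfl
  | succ j ih =>
    have hstep : genMap a ω (-(j + 1 : ℕ)) = -j := by
      simp only [genMap, hone (-(j + 1 : ℕ)) (by omega) (by omega)]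
      omega
    rw [Function.iterate_succ_apply, hstep, ih (by omega)]

lemma exists_iterate_eq_of_barrier (hpos : ∀ s, 1 ≤ a s ω) {b : ℤ}
    (hbar : ∀ s < b, s + a s ω ≤ b) {d : ℤ} (hd : d ≤ b) :
    ∃ j, (genMap a ω)^[j] d = b := by
  induction h : (b - d).toNat using Nat.strong_induction_on generalizing d with
  | _ N ih =>
    rcases hd.eq_or_lt with rfl | hlt
    · exact ⟨0, rfl⟩
    · have hnext : genMap a ω d ≤ b := hbar d hlt
      have hgt : d < genMap a ω d := by have := hpos d; simp only [genMap]; omega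
      obtain ⟨j, hj⟩ := ih _ (by omega) hnext rfl
      exact ⟨j + 1, by rwa [Function.iterate_succ_apply]⟩

end Orbit

/-- Constraints on the steps making `b + 1 = 1 - (n + k)` an ephemeral `n`-th ancestor of a
successful `0`, where `b = -(n + k)`: the sites `-n, …, -1` step by `1` (a path from `-n` to `0`),
`b + 1` and `b` step by `k`, landing on `1 - n` and `-n`, and every site below `b` steps to at most
`b`, so that all of them descend from `b` and none from `b + 1`. -/
def forcingSet (n k : ℕ) (s : ℤ) : Set ℕ :=
  if s < -((n + k : ℕ) : ℤ) then {c | s + c ≤ -((n + k : ℕ) : ℤ)}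
  else if s < 2 - ((n + k : ℕ) : ℤ) then {k}
  else if -(n : ℤ) ≤ s ∧ s < 0 then {1}
  else Set.univ

section Forcing

variable {Ω : Type*} (a : ℤ → Ω → ℕ) (ω : Ω) {n k : ℕ}

lemma forcing_eq_one (hk : 2 ≤ k) (hF : ∀ s, a s ω ∈ forcingSet n k s) (s : ℤ)
    (hs₁ : -(n : ℤ) ≤ s) (hs₂ : s < 0) : a s ω = 1 := by
  have h := hF s
  rwa [forcingSet, if_neg (by omega), if_neg (by omega), if_pos ⟨hs₁, hs₂⟩] at h

lemma forcing_add_le (hF : ∀ s, a s ω ∈ forcingSet n k s) (s : ℤ)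
    (hs : s < -((n + k : ℕ) : ℤ)) : s + a s ω ≤ -((n + k : ℕ) : ℤ) := by
  have h := hF s
  rwa [forcingSet, if_pos hs] at h

lemma forcing_eq_k (hF : ∀ s, a s ω ∈ forcingSet n k s) (s : ℤ)
    (hs₁ : -((n + k : ℕ) : ℤ) ≤ s) (hs₂ : s ≤ 1 - ((n + k : ℕ) : ℤ)) : a s ω = k := by
  have h := hF s
  rwa [forcingSet, if_neg (by omega), if_pos (by omega)] at h

lemma forcing_genMap_eq (hF : ∀ s, a s ω ∈ forcingSet n k s) :
    genMap a ω (-((n + k : ℕ) : ℤ)) = -(n : ℤ) := by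
  simp only [genMap, forcing_eq_k a ω hF _ le_rfl (by omega)]
  omega

lemma forcing_iterate_eq_zero (hk : 2 ≤ k) (hF : ∀ s, a s ω ∈ forcingSet n k s) (hn : 1 ≤ n) :
    (genMap a ω)^[n] (1 - ((n + k : ℕ) : ℤ)) = 0 := by
  obtain ⟨n, rfl⟩ : ∃ n', n = n' + 1 := ⟨n - 1, by omega⟩
  have hstep : genMap a ω (1 - ((n + 1 + k : ℕ) : ℤ)) = -(n : ℤ) := by
    simp only [genMap, forcing_eq_k a ω hF _ (by omega) le_rfl]
    omega
  rw [Function.iterate_succ_apply, hstep]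
  exact iterate_neg_eq_zero_of_ones a ω (fun s h₁ h₂ => forcing_eq_one a ω hk hF s (by omega) h₂)
    (by omega)

lemma forcing_descendants_infinite (hpos : ∀ s, 1 ≤ a s ω) (hk : 2 ≤ k)
    (hF : ∀ s, a s ω ∈ forcingSet n k s) : (descendants a ω 0).Infinite := by
  refine Set.infinite_of_not_bddBelow fun ⟨N, hN⟩ => ?_
  set d := min N (-((n + k : ℕ) : ℤ)) - 1
  obtain ⟨j, hj⟩ := exists_iterate_eq_of_barrier a ω hpos (forcing_add_le a ω hF)
    (show d ≤ _ by omega)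
  have hd : d ∈ descendants a ω 0 := ⟨n + 1 + j, by
    rw [Function.iterate_add_apply, Function.iterate_succ_apply, hj, forcing_genMap_eq a ω hF,
      iterate_neg_eq_zero_of_ones a ω (forcing_eq_one a ω hk hF) le_rfl]⟩
  have := hN hd
  omega

lemma forcing_descendants_finite (hpos : ∀ s, 1 ≤ a s ω) (hk : 2 ≤ k)
    (hF : ∀ s, a s ω ∈ forcingSet n k s) :
    (descendants a ω (1 - ((n + k : ℕ) : ℤ))).Finite := by
  set b := -((n + k : ℕ) : ℤ)
  refine (Set.finite_singleton (b + 1)).subset fun d ⟨r, hr⟩ => ?_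
  by_contra hne
  have hdb : d ≤ b := by
    have := le_iterate a ω d r
    simp only [Set.mem_singleton_iff] at hne
    omega
  obtain ⟨j, hj⟩ := exists_iterate_eq_of_barrier a ω hpos (forcing_add_le a ω hF) hdb
  rcases le_or_gt r j with hrj | hjr
  · have := (strictMono_iterate a ω hpos d).monotone hrj
    omega
  · obtain ⟨i, rfl⟩ : ∃ i, r = i + 1 + j := ⟨r - j - 1, by omega⟩
    rw [Function.iterate_add_apply, hj, Function.iterate_succ_apply, forcing_genMap_eq a ω hF] at hr
    have := le_iterate a ω (-(n : ℤ)) i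
    omega

end Forcing

section Measurability

variable {Ω : Type*} (a : ℤ → Ω → ℕ)

lemma setOf_iterate_succ_eq (p r : ℤ) (j : ℕ) :
    {ω | (genMap a ω)^[j + 1] p = r} =
      ⋃ c : ℕ, a p ⁻¹' {c} ∩ {ω | (genMap a ω)^[j] (p + c) = r} := by
  ext ω
  simp [Function.iterate_succ_apply, genMap]

lemma measurableSet_iterate_eq_comapOn_Ici (j : ℕ) (p r : ℤ) :
    MeasurableSet[comapOn a (Set.Ici p)] {ω | (genMap a ω)^[j] p = r} := by
  induction j generalizing p with
  | zero => simp only [Function.iterate_zero, id_eq]; exact MeasurableSet.const _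
  | succ j ih =>
    rw [setOf_iterate_succ_eq]
    refine MeasurableSet.iUnion fun c => .inter (measurableSet_comapOn a le_rfl (.of_discrete)) ?_
    exact comapOn_mono a (Set.Ici_subset_Ici.2 (by omega)) _ (ih (p + c))

lemma measurableSet_iterate_eq_comapOn_Iio (hpos : ∀ s ω, 1 ≤ a s ω) (j : ℕ) (p m : ℤ) :
    MeasurableSet[comapOn a (Set.Iio m)] {ω | (genMap a ω)^[j] p = m} := by
  induction j generalizing p with
  | zero => simp only [Function.iterate_zero, id_eq]; exact MeasurableSet.const _
  | succ j ih =>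
    rcases lt_or_ge p m with hpm | hmp
    · rw [setOf_iterate_succ_eq]
      exact MeasurableSet.iUnion fun c =>
        .inter (measurableSet_comapOn a (i := p) hpm .of_discrete) (ih (p + c))
    · convert MeasurableSet.empty
      refine Set.eq_empty_of_forall_notMem fun ω hω => ?_
      have := (strictMono_iterate a ω (hpos · ω) p) (show 0 < j + 1 by omega)
      simp only [Function.iterate_zero, id_eq] at this
      simp only [Set.mem_ofPred_eq] at hω
      omega

lemma measurableSet_finite_descendants_of_iterate {m' : MeasurableSpace Ω} (m : ℤ)
    (h : ∀ j p, MeasurableSet[m'] {ω | (genMap a ω)^[j] p = m}) :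
    MeasurableSet[m'] {ω | (descendants a ω m).Finite} := by
  have hset : {ω | (descendants a ω m).Finite} =
      ⋃ N : ℤ, ⋂ p : ℤ, ⋂ _ : p < N, ⋂ j : ℕ, {ω | (genMap a ω)^[j] p = m}ᶜ := by
    ext ω
    simp only [Set.mem_ofPred_eq, finite_descendants_iff_bddBelow, BddBelow, Set.Nonempty,
      mem_lowerBounds, Set.mem_iUnion, Set.mem_iInter, Set.mem_compl_iff]
    refine exists_congr fun N => ⟨fun hN p hp j hj => ?_, fun hN p ⟨j, hj⟩ => ?_⟩
    · exact absurd (hN p ⟨j, hj⟩) (by omega)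
    · by_contra hlt
      exact hN p (by omega) j hj
  rw [hset]
  exact .iUnion fun N => .iInter fun p => .iInter fun _ => .iInter fun j => (h j p).compl

variable [MeasurableSpace Ω] (hmeas : ∀ s, Measurable (a s))
include hmeas

lemma measurableSet_iterate_eq (j : ℕ) (p r : ℤ) :
    MeasurableSet {ω | (genMap a ω)^[j] p = r} :=
  comapOn_le a hmeas _ _ (measurableSet_iterate_eq_comapOn_Ici a j p r)

lemma measurableSet_finite_descendants (m : ℤ) :
    MeasurableSet {ω | (descendants a ω m).Finite} :=
  measurableSet_finite_descendants_of_iterate a m fun j p => measurableSet_iterate_eq a hmeas j p m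

end Measurability

section Stationarity

variable {Ω : Type*} [MeasurableSpace Ω] (a : ℤ → Ω → ℕ) (hmeas : ∀ s, Measurable (a s))
  (P : Measure Ω) (hident : ∀ s, P.map (a s) = P.map (a 0))

include hmeas hident in
lemma measure_preimage_eq (s : ℤ) (B : Set ℕ) : P (a s ⁻¹' B) = P (a 0 ⁻¹' B) := by
  rw [← Measure.map_apply (hmeas s) .of_discrete, hident, Measure.map_apply (hmeas 0) .of_discrete]

variable (hindep : iIndepFun a P)
include hmeas hident hindep

lemma map_shift_eq (m : ℤ) : P.map (fun ω s => a (s + m) ω) = P.map (fun ω s => a s ω) := by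
  rw [(hindep.precomp (add_left_injective m)).map_fun_eq_infinitePi_map (fun s => hmeas _),
    hindep.map_fun_eq_infinitePi_map hmeas]
  simp only [hident]

lemma measure_shift_preimage (m : ℤ) {E : Set (ℤ → ℕ)} (hE : MeasurableSet E) :
    P ((fun ω s => a (s + m) ω) ⁻¹' E) = P ((fun ω s => a s ω) ⁻¹' E) := by
  rw [← Measure.map_apply (measurable_pi_lambda _ fun s => hmeas _) hE, map_shift_eq a hmeas P
    hident hindep, Measure.map_apply (measurable_pi_lambda _ hmeas) hE]

lemma measure_iterate_eq_sub (j : ℕ) (m r : ℤ) :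
    P {ω | (genMap a ω)^[j] m = r} = P {ω | (genMap a ω)^[j] 0 = r - m} := by
  have hset : {ω | (genMap a ω)^[j] m = r} = (fun ω s => a (s + m) ω) ⁻¹'
      {x | (genMap (fun s (x : ℤ → ℕ) => x s) x)^[j] 0 = r - m} := by
    ext ω
    have h := iterate_add a ω m 0 j
    rw [zero_add] at h
    change (genMap a ω)^[j] m = r ↔ (genMap (fun s => a (s + m)) ω)^[j] 0 = r - m
    rw [h]
    omega
  rw [hset, measure_shift_preimage a hmeas P hident hindep m
    (measurableSet_iterate_eq _ measurable_pi_apply j 0 (r - m))]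
  rfl

lemma tsum_measure_iterate_eq [IsProbabilityMeasure P] (j : ℕ) (r : ℤ) :
    ∑' m : ℤ, P {ω | (genMap a ω)^[j] m = r} = 1 := by
  simp_rw [measure_iterate_eq_sub a hmeas P hident hindep j _ r]
  have hreindex := (Equiv.subLeft r).tsum_eq fun z => P {ω | (genMap a ω)^[j] 0 = z}
  simp only [Equiv.subLeft_apply] at hreindex
  rw [hreindex, ← measure_iUnion
      (fun z z' h => Set.disjoint_left.2 fun ω h₁ h₂ => h (h₁.symm.trans h₂))
      (measurableSet_iterate_eq a hmeas j 0),
    (Set.iUnion_eq_univ_iff (f := fun z => {ω | (genMap a ω)^[j] 0 = z})).2 fun ω => ⟨_, rfl⟩,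
    measure_univ]

lemma measure_finite_descendants_eq (m : ℤ) :
    P {ω | (descendants a ω m).Finite} = P {ω | (descendants a ω 0).Finite} := by
  have hset : {ω | (descendants a ω m).Finite} = (fun ω s => a (s + m) ω) ⁻¹'
      {x | (descendants (fun s (x : ℤ → ℕ) => x s) x 0).Finite} := by
    ext ω
    change _ ↔ (descendants (fun s => a (s + m)) ω 0).Finite
    rw [descendants_shift]
    exact ⟨fun h => h.preimage (add_left_injective m).injOn,
      fun h => h.of_preimage (add_right_surjective m)⟩
  rw [hset, measure_shift_preimage a hmeas P hident hindep m
    (measurableSet_finite_descendants _ measurable_pi_apply 0)]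
  rfl

lemma measure_iterate_eq_inter_finite_descendants (hpos : ∀ s ω, 1 ≤ a s ω) (j : ℕ) (m r : ℤ) :
    P ({ω | (genMap a ω)^[j] m = r} ∩ {ω | (descendants a ω m).Finite}) =
      P {ω | (genMap a ω)^[j] m = r} * P {ω | (descendants a ω 0).Finite} := by
  have hfin : MeasurableSet[comapOn a (Set.Ici m)ᶜ] {ω | (descendants a ω m).Finite} := by
    rw [Set.compl_Ici]
    exact measurableSet_finite_descendants_of_iterate a m
      (measurableSet_iterate_eq_comapOn_Iio a hpos · · m)
  rw [hindep.measure_inter_eq_mul_of_comapOn a hmeas _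
    (measurableSet_iterate_eq_comapOn_Ici a j m r) hfin,
    measure_finite_descendants_eq a hmeas P hident hindep]

end Stationarity

section ForcingProbability

lemma measure_preimage_compl_forcingSet_le {Ω : Type*} [MeasurableSpace Ω] (P : Measure Ω)
    [IsProbabilityMeasure P] {X : Ω → ℕ} (hX : ∀ ω, 1 ≤ X ω) {n k : ℕ} (hk : 2 ≤ k) (s : ℤ) :
    P (X ⁻¹' (forcingSet n k s)ᶜ) ≤
      if s < 0 then P {ω | -s < X ω + ((n + k : ℕ) : ℤ)} else 0 := by
  by_cases hs : s < 0
  · rw [if_pos hs]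
    by_cases hsn : s < -((n + k : ℕ) : ℤ)
    · rw [forcingSet, if_pos hsn]
      refine measure_mono fun ω hω => ?_
      simp only [Set.mem_preimage, Set.mem_compl_iff, Set.mem_ofPred_eq] at hω ⊢
      omega
    · have huniv : {ω | -s < X ω + ((n + k : ℕ) : ℤ)} = Set.univ :=
        Set.eq_univ_of_forall fun ω => by have := hX ω; simp only [Set.mem_ofPred_eq]; omega
      rw [huniv, measure_univ]
      exact prob_le_one
  · have huniv : forcingSet n k s = Set.univ := by
      rw [forcingSet, if_neg (by omega), if_neg (by omega), if_neg (by omega)]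
    simp [huniv]

variable {Ω : Type*} [MeasurableSpace Ω] (a : ℤ → Ω → ℕ) (hmeas : ∀ s, Measurable (a s))
  (hpos : ∀ s ω, 1 ≤ a s ω) (P : Measure Ω) [IsProbabilityMeasure P]
  (hident : ∀ s, P.map (a s) = P.map (a 0)) (hmean : ∫⁻ ω, (a 0 ω : ℝ≥0∞) ∂P < ⊤)
include hmeas hpos hident hmean

lemma tsum_measure_compl_forcingSet_ne_top {n k : ℕ} (hk : 2 ≤ k) :
    ∑' s, P (a s ⁻¹' (forcingSet n k s)ᶜ) ≠ ∞ := by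
  set u : ℤ → ℝ≥0∞ := fun s => if s < 0 then P {ω | -s < a 0 ω + ((n + k : ℕ) : ℤ)} else 0
  have hle : ∀ s, P (a s ⁻¹' (forcingSet n k s)ᶜ) ≤ u s := fun s => by
    rw [measure_preimage_eq a hmeas P hident]
    exact measure_preimage_compl_forcingSet_le P (hpos 0) hk s
  have hsupp : Function.support u ⊆ Set.range fun i : ℕ => -(i : ℤ) := fun s hs => by
    have : s < 0 := by by_contra h; exact hs (if_neg h)
    exact ⟨(-s).toNat, show -(((-s).toNat : ℕ) : ℤ) = s by omega⟩
  have hreindex : ∀ i : ℕ, u (-(i : ℤ)) ≤ P {ω | i < a 0 ω + (n + k)} := fun i => by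
    simp only [u]
    split_ifs
    · refine measure_mono fun ω hω => ?_
      simp only [Set.mem_ofPred_eq] at hω ⊢
      omega
    · exact zero_le
  refine ne_top_of_le_ne_top ?_ (ENNReal.tsum_le_tsum hle)
  rw [← (neg_injective.comp Nat.cast_injective).tsum_eq hsupp]
  refine ne_top_of_le_ne_top ?_ (ENNReal.tsum_le_tsum hreindex)
  rw [tsum_measure_lt_eq_lintegral P ((hmeas 0).add_const _)]
  simp only [Nat.cast_add]
  rw [lintegral_add_right _ measurable_const, lintegral_const, measure_univ, mul_one]
  exact ENNReal.add_ne_top.2 ⟨hmean.ne, by simp⟩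

variable (hindep : iIndepFun a P) (h1 : 0 < P {ω | a 0 ω = 1})
include hindep h1

lemma measure_forcing_pos {n k : ℕ} (hk : 2 ≤ k) (hkpos : 0 < P (a 0 ⁻¹' {k})) :
    0 < P (⋂ s, a s ⁻¹' forcingSet n k s) := by
  refine hindep.measure_iInter_preimage_pos hmeas (fun _ => .of_discrete) (fun s => ?_)
    (tsum_measure_compl_forcingSet_ne_top a hmeas hpos P hident hmean hk)
  rw [measure_preimage_eq a hmeas P hident, forcingSet]
  split_ifs with hs
  · exact h1.trans_le (measure_mono fun ω (hω : a 0 ω = 1) => by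
      simp only [Set.mem_preimage, Set.mem_ofPred_eq, hω]
      omega)
  · exact hkpos
  · exact h1
  · simp

lemma tsum_measure_iterate_eq_zero_inter_finite_lt {n k : ℕ} (hn : 1 ≤ n) (hk : 2 ≤ k)
    (hkpos : 0 < P (a 0 ⁻¹' {k})) :
    ∑' m, P ({ω | (genMap a ω)^[n] m = 0} ∩ {ω | (descendants a ω 0).Finite}) <
      P {ω | (descendants a ω 0).Finite} := by
  set F := ⋂ s, a s ⁻¹' forcingSet n k s
  have hF : ∀ ω ∈ F, ∀ s, a s ω ∈ forcingSet n k s := fun ω hω => Set.mem_iInter.1 hω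
  have hle := tsum_measure_add_le_tsum P (1 - ((n + k : ℕ) : ℤ))
    (A := fun m => {ω | (genMap a ω)^[n] m = 0} ∩ {ω | (descendants a ω 0).Finite})
    (B := fun m => {ω | (genMap a ω)^[n] m = 0} ∩ {ω | (descendants a ω m).Finite})
    (fun m ω ⟨hω, hfin⟩ => ⟨hω, hfin.subset (descendants_subset_of_iterate_eq a ω hω)⟩)
    (fun ω hω => ⟨forcing_iterate_eq_zero a ω hk (hF ω hω) hn,
      forcing_descendants_finite a ω (hpos · ω) hk (hF ω hω)⟩)
    (Set.disjoint_right.2 fun ω hω h =>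
      (forcing_descendants_infinite a ω (hpos · ω) hk (hF ω hω)) h.2)
    (.iInter fun s => hmeas s .of_discrete)
  have hsum : ∑' m, P ({ω | (genMap a ω)^[n] m = 0} ∩ {ω | (descendants a ω m).Finite}) =
      P {ω | (descendants a ω 0).Finite} := by
    simp_rw [measure_iterate_eq_inter_finite_descendants a hmeas P hident hindep hpos]
    rw [ENNReal.tsum_mul_right, tsum_measure_iterate_eq a hmeas P hident hindep, one_mul]
  rw [hsum] at hle
  exact (ENNReal.lt_add_right (le_self_add.trans hle |>.trans_lt (measure_lt_top P _)).ne
    (measure_forcing_pos a hmeas hpos P hident hmean hindep h1 hk hkpos).ne').trans_le hle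

end ForcingProbability

end GenMap

/-- Assume `ℙ[a₀ = 1] ∈ (0,1)` and `E[a₀] < ∞`. Then for every
`n ≥ 1`, `E[d_n(0) | 0 successful] > 1` and `E[d_n(0) | 0 ephemeral] < 1`, where
`d_n(0) = #{m ∈ ℤ : f^n(m) = 0}` (expressed as the `ℝ≥0∞`-valued sum of indicators),
`0` is successful if it has infinitely many descendants and ephemeral otherwise. -/
theorem conditional_mean_offspring_supercritical_subcritical
    {Ω : Type*} [MeasurableSpace Ω] (P : Measure Ω) [IsProbabilityMeasure P]
    (a : ℤ → Ω → ℕ) (hmeas : ∀ n, Measurable (a n)) (hpos : ∀ n ω, 1 ≤ a n ω)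
    (hindep : iIndepFun a P)
    (hident : ∀ n, Measure.map (a n) P = Measure.map (a 0) P)
    (hmean : ∫⁻ ω, (a 0 ω : ℝ≥0∞) ∂P < ⊤)
    (h1 : 0 < P {ω | a 0 ω = 1}) (h1' : P {ω | a 0 ω = 1} < 1) :
    ∀ n : ℕ, 1 ≤ n →
      1 < ∫⁻ ω, (∑' m : ℤ, if (genMap a ω)^[n] m = 0 then (1 : ℝ≥0∞) else 0)
            ∂(P[|{ω | (descendants a ω 0).Infinite}]) ∧
      ∫⁻ ω, (∑' m : ℤ, if (genMap a ω)^[n] m = 0 then (1 : ℝ≥0∞) else 0)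
            ∂(P[|{ω | (descendants a ω 0).Finite}]) < 1 := by
  intro n hn
  obtain ⟨k, hk, hkpos⟩ := exists_two_le_measure_preimage_pos (hmeas 0) (hpos 0) h1'
  have hiter := (GenMap.measurableSet_iterate_eq a hmeas n · 0)
  have hInf : {ω | (descendants a ω 0).Infinite} = {ω | (descendants a ω 0).Finite}ᶜ := rfl
  rw [hInf]
  refine one_lt_lintegral_cond_compl_and_lintegral_cond_lt_one
    (GenMap.measurableSet_finite_descendants a hmeas 0) ?_ ?_
  · rw [lintegral_tsum_ite_eq P hiter, GenMap.tsum_measure_iterate_eq a hmeas P hident hindep]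
  · simp_rw [lintegral_tsum_ite_eq _ hiter, Measure.restrict_apply (hiter _)]
    exact GenMap.tsum_measure_iterate_eq_zero_inter_finite_lt a hmeas hpos P hident hmean hindep h1
      hn hk hkpos
end
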